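/- Let r ≥ 3 and let H be an r-uniform hypergraph on an n-element vertex set V such that V can be partitioned into parts of size r² each, every hyperedge of H is contained in one part, and within each part every pair of distinct vertices lies in exactly one hyperedge (i.e., H is a disjoint union of Steiner systems S(2,r,r²)). Then H is linear, H contains no copy of B_4^r, and r·|E(H)| = (r+1)·n. -/

import Mathlib

/-!
Fix a vertex `v` in its part `p`. The edges through `v` lie in `p` and, with `v` removed,
partition `p \ {v}` into blocks of size `r - 1`; as `r² - 1 = (r + 1)(r - 1)`, every vertex has
degree `r + 1`, and double counting vertex–edge incidences gives `r·|E| = (r + 1)·n`.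
Linearity holds because two vertices of an edge lie in its part, where they span only one edge.
For `B₄`: the part of `v` contains `e₁` and hence `f`, so each vertex of `f` spans with `v` an
edge through `v`, and by linearity distinct vertices of `f` give distinct edges. These `r` edges
all meet `f`, whereas `e₂` and `e₃` miss it, so `v` would have degree at least `r + 2`.
-/

open Finset

namespace SteinerUnion

variable {V : Type*}

/-- The edges through `v` lie in `p` and, with `v` removed, partition `p \ {v}`. -/
def StarPartitions (E : Finset (Finset V)) (v : V) (p : Finset V) : Prop :=
  (∀ e ∈ E, v ∈ e → e ⊆ p) ∧ ∀ w ∈ p, w ≠ v → ∃! e, e ∈ E ∧ v ∈ e ∧ w ∈ e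

theorem StarPartitions.eq_of_mem_of_mem {E : Finset (Finset V)} {v : V} {p : Finset V}
    (h : StarPartitions E v p) {e f : Finset V} (he : e ∈ E) (hf : f ∈ E) {w : V} (hwv : w ≠ v)
    (hve : v ∈ e) (hwe : w ∈ e) (hvf : v ∈ f) (hwf : w ∈ f) : e = f :=
  (h.2 w (h.1 e he hve hwe) hwv).unique ⟨he, hve, hwe⟩ ⟨hf, hvf, hwf⟩

variable [DecidableEq V]

def IsLinear (E : Finset (Finset V)) : Prop :=
  ∀ e ∈ E, ∀ f ∈ E, e ≠ f → #(e ∩ f) ≤ 1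

theorem IsLinear.eq_of_mem_of_mem {E : Finset (Finset V)} (hE : IsLinear E)
    {e f : Finset V} (he : e ∈ E) (hf : f ∈ E) {u w : V} (huw : u ≠ w)
    (hue : u ∈ e) (hwe : w ∈ e) (huf : u ∈ f) (hwf : w ∈ f) : e = f := by
  by_contra hef
  have : 1 < #(e ∩ f) :=
    one_lt_card.mpr ⟨u, mem_inter.mpr ⟨hue, huf⟩, w, mem_inter.mpr ⟨hwe, hwf⟩, huw⟩
  exact (hE e he f hf hef).not_gt this

theorem isLinear_of_forall_starPartitions {E : Finset (Finset V)}
    (h : ∀ v, ∃ p, StarPartitions E v p) : IsLinear E := by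
  intro e he f hf hef
  refine card_le_one.mpr fun u hu w hw ↦ ?_
  by_contra huw
  rw [mem_inter] at hu hw
  obtain ⟨p, hp⟩ := h u
  exact hef (hp.eq_of_mem_of_mem he hf (Ne.symm huw) hu.1 hw.1 hu.2 hw.2)

namespace StarPartitions

variable {E : Finset (Finset V)} {v : V} {p : Finset V}

theorem card_filter_mul {r : ℕ} (h : StarPartitions E v p) (hvp : v ∈ p)
    (huniform : ∀ e ∈ E, #e = r) : #{e ∈ E | v ∈ e} * (r - 1) = #p - 1 := by
  have hdisj : (({e ∈ E | v ∈ e} : Finset _) : Set (Finset V)).PairwiseDisjoint (·.erase v) := by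
    intro e he f hf hef
    rw [mem_coe, mem_filter] at he hf
    refine disjoint_left.mpr fun w hwe hwf ↦ hef ?_
    rw [mem_erase] at hwe hwf
    exact h.eq_of_mem_of_mem he.1 hf.1 hwe.1 he.2 hwe.2 hf.2 hwf.2
  have hcover : {e ∈ E | v ∈ e}.biUnion (·.erase v) = p.erase v := by
    ext w
    simp only [mem_biUnion, mem_filter, mem_erase]
    constructor
    · rintro ⟨e, ⟨he, hve⟩, hwv, hwe⟩
      exact ⟨hwv, h.1 e he hve hwe⟩
    · rintro ⟨hwv, hwp⟩
      obtain ⟨e, ⟨he, hve, hwe⟩, -⟩ := h.2 w hwp hwv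
      exact ⟨e, ⟨he, hve⟩, hwv, hwe⟩
  rw [← card_erase_of_mem hvp, ← hcover, card_biUnion hdisj, sum_congr rfl, sum_const,
    smul_eq_mul]
  intro e he
  rw [mem_filter] at he
  rw [card_erase_of_mem he.2, huniform e he.1]

theorem card_filter_eq {r : ℕ} (hr : 2 ≤ r) (h : StarPartitions E v p) (hvp : v ∈ p)
    (huniform : ∀ e ∈ E, #e = r) (hp : #p = r ^ 2) : #{e ∈ E | v ∈ e} = r + 1 := by
  have hmul := h.card_filter_mul hvp huniform
  rw [hp, ← one_pow 2, Nat.sq_sub_sq] at hmul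
  exact Nat.eq_of_mul_eq_mul_right (by omega) hmul

theorem card_add_card_filter_disjoint_le (h : StarPartitions E v p) (hE : IsLinear E)
    {f : Finset V} (hf : f ∈ E) (hfp : f ⊆ p) (hvf : v ∉ f) :
    #f + #{e ∈ {e ∈ E | v ∈ e} | Disjoint f e} ≤ #{e ∈ E | v ∈ e} := by
  have hspan : ∀ w ∈ f, ∃ e ∈ {e ∈ E | v ∈ e}, w ∈ e := fun w hw ↦ by
    obtain ⟨e, ⟨he, hve, hwe⟩, -⟩ := h.2 w (hfp hw) (ne_of_mem_of_not_mem hw hvf)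
    exact ⟨e, mem_filter.mpr ⟨he, hve⟩, hwe⟩
  choose! g hg hwg using hspan
  have hinj : Set.InjOn g f := by
    intro w hw w' hw' hgw
    by_contra hne
    have hge := mem_filter.mp (hg w hw)
    have hgf : g w = f := hE.eq_of_mem_of_mem hge.1 hf hne (hwg w hw)
      (hgw ▸ hwg w' hw') hw hw'
    exact hvf (hgf ▸ hge.2)
  have hmeeting := card_le_card_of_injOn (t := {e ∈ {e ∈ E | v ∈ e} | ¬Disjoint f e}) g
    (fun w hw ↦ mem_filter.mpr ⟨hg w hw, not_disjoint_iff.mpr ⟨w, hw, hwg w hw⟩⟩) hinj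
  have hsplit : #{e ∈ {e ∈ E | v ∈ e} | Disjoint f e} + #{e ∈ {e ∈ E | v ∈ e} | ¬Disjoint f e}
      = #{e ∈ E | v ∈ e} := card_filter_add_card_filter_not _
  omega

end StarPartitions

section Partition

variable {E P : Finset (Finset V)}

theorem edge_subset_part (hdisjoint : ∀ p ∈ P, ∀ q ∈ P, p ≠ q → p ∩ q = ∅)
    (hedges : ∀ e ∈ E, ∃ p ∈ P, e ⊆ p) {e p : Finset V} (he : e ∈ E) (hp : p ∈ P) {v : V}
    (hve : v ∈ e) (hvp : v ∈ p) : e ⊆ p := by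
  obtain ⟨q, hq, heq⟩ := hedges e he
  obtain rfl : p = q := by
    by_contra hpq
    simpa [hdisjoint p hp q hq hpq] using mem_inter.mpr ⟨hvp, heq hve⟩
  exact heq

theorem starPartitions_of_mem (hdisjoint : ∀ p ∈ P, ∀ q ∈ P, p ≠ q → p ∩ q = ∅)
    (hedges : ∀ e ∈ E, ∃ p ∈ P, e ⊆ p)
    (hsteiner : ∀ p ∈ P, ∀ u ∈ p, ∀ v ∈ p, u ≠ v → ∃! e, e ∈ E ∧ u ∈ e ∧ v ∈ e)
    {p : Finset V} (hp : p ∈ P) {v : V} (hvp : v ∈ p) : StarPartitions E v p :=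
  ⟨fun _ he hve ↦ edge_subset_part hdisjoint hedges he hp hve hvp,
    fun w hwp hwv ↦ hsteiner p hp v hvp w hwp (Ne.symm hwv)⟩

end Partition

end SteinerUnion

open SteinerUnion in
/-- If an r-uniform hypergraph H on n vertices is a disjoint union of
Steiner systems S(2,r,r²) (the vertex set is partitioned into parts of size r², every
hyperedge lies in one part, and within each part every pair of distinct vertices lies
in exactly one hyperedge), then H is linear, B_4^r-free, and r·|E(H)| = (r+1)·n. -/
theorem stmt_10 {V : Type*} [Fintype V] [DecidableEq V]
    (r n : ℕ) (hr : 3 ≤ r)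
    (hn : Fintype.card V = n)
    (E : Finset (Finset V))
    (huniform : ∀ e ∈ E, e.card = r)
    (P : Finset (Finset V))
    (hpartcard : ∀ p ∈ P, p.card = r ^ 2)
    (hdisjoint : ∀ p ∈ P, ∀ q ∈ P, p ≠ q → p ∩ q = ∅)
    (hcover : ∀ v : V, ∃ p ∈ P, v ∈ p)
    (hedges : ∀ e ∈ E, ∃ p ∈ P, e ⊆ p)
    (hsteiner : ∀ p ∈ P, ∀ u ∈ p, ∀ v ∈ p, u ≠ v → ∃! e, e ∈ E ∧ u ∈ e ∧ v ∈ e) :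
    (∀ e ∈ E, ∀ f ∈ E, e ≠ f → (e ∩ f).card ≤ 1) ∧
    (¬ ∃ e₁ ∈ E, ∃ e₂ ∈ E, ∃ e₃ ∈ E, ∃ f ∈ E, ∃ v : V,
      e₁ ≠ e₂ ∧ e₁ ≠ e₃ ∧ e₁ ≠ f ∧ e₂ ≠ e₃ ∧ e₂ ≠ f ∧ e₃ ≠ f ∧
      v ∈ e₁ ∧ v ∈ e₂ ∧ v ∈ e₃ ∧ v ∉ f ∧
      (f ∩ e₁).Nonempty ∧ f ∩ e₂ = ∅ ∧ f ∩ e₃ = ∅) ∧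
    r * E.card = (r + 1) * n := by
  have hstar : ∀ {p}, p ∈ P → ∀ {v}, v ∈ p → StarPartitions E v p :=
    starPartitions_of_mem hdisjoint hedges hsteiner
  have hdeg : ∀ v, #{e ∈ E | v ∈ e} = r + 1 := fun v ↦ by
    obtain ⟨p, hp, hvp⟩ := hcover v
    exact (hstar hp hvp).card_filter_eq (by omega) hvp huniform (hpartcard p hp)
  have hlin : IsLinear E := isLinear_of_forall_starPartitions fun v ↦
    (hcover v).imp fun p ⟨hp, hvp⟩ ↦ hstar hp hvp
  refine ⟨hlin, ?_, ?_⟩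
  · rintro ⟨e₁, he₁, e₂, he₂, e₃, he₃, f, hf, v, -, -, -, h23, -, -, hv1, hv2, hv3, hvf,
      ⟨x, hx⟩, hf2, hf3⟩
    obtain ⟨p, hp, hvp⟩ := hcover v
    rw [mem_inter] at hx
    have hxp : x ∈ p := (hstar hp hvp).1 e₁ he₁ hv1 hx.2
    have hfp : f ⊆ p := edge_subset_part hdisjoint hedges hf hp hx.1 hxp
    have hbound := (hstar hp hvp).card_add_card_filter_disjoint_le hlin hf hfp hvf
    have hmissing : 2 ≤ #{e ∈ {e ∈ E | v ∈ e} | Disjoint f e} := by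
      rw [← card_pair h23]
      refine card_le_card ?_
      simp [insert_subset_iff, he₂, he₃, hv2, hv3, disjoint_iff_inter_eq_empty, hf2, hf3]
    rw [huniform f hf, hdeg v] at hbound
    omega
  · have hincidences := sum_card (n := r + 1) hdeg
    rw [sum_congr rfl huniform, sum_const, smul_eq_mul, hn] at hincidences
    linarith
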